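/- Last-use opacity supports aborting early release: there exist a prefix-closed set 𝓔 of histories and a history H ∈ 𝓔 such that H is last-use opaque with respect to 𝓔 and H contains a transaction T_i that releases some variable early in H and whose subhistory H|T_i contains the abort response A_i. -/

import Mathlib

/-!
Formal model of transactional memory (TM) histories, following Siek &
Wojciechowski, "Last-use Opacity: A Strong Safety Property for Transactional
Memory with Early Release Support".

Transactions and shared variables are indexed by natural numbers; values of
variables are natural numbers with initial value 0.
-/

namespace TM

open Classical

/-- Transactional operations: `init`, read of a variable, write of a value to
a variable, `tryCommit` and `tryAbort`. -/
inductive Op : Type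
  | init : Op
  | read : ℕ → Op
  | write : ℕ → ℕ → Op
  | tryCommit : Op
  | tryAbort : Op
  deriving DecidableEq

/-- Responses: `ok`, a value (for reads), commit `C_i`, abort `A_i`. -/
inductive Resp : Type
  | ok : Resp
  | value : ℕ → Resp
  | committed : Resp
  | aborted : Resp
  deriving DecidableEq

/-- Invocation and response events, tagged with the transaction executing them. -/
inductive Event : Type
  | inv : ℕ → Op → Event
  | res : ℕ → Resp → Event
  deriving DecidableEq

/-- The transaction executing an event. -/
def Event.txn : Event → ℕ
  | .inv t _ => t
  | .res t _ => t

/-- A history is a finite sequence of events. -/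
abbrev History := List Event

/-- `proj i H` is `H|T_i`, the subsequence of events of transaction `i`. -/
def proj (i : ℕ) (H : History) : History :=
  H.filter (fun e => e.txn == i)

/-- Transaction `i` is in `H` (`H|T_i ≠ ∅`). -/
def inTxn (H : History) (i : ℕ) : Prop := proj i H ≠ []

/-- `T_i` is committed in `H`: `H|T_i` contains `tryC_i → C_i`. -/
def committed (H : History) (i : ℕ) : Prop :=
  List.Sublist [Event.inv i Op.tryCommit, Event.res i Resp.committed] (proj i H)

/-- `T_i` is aborted in `H`: `H|T_i` contains a response `A_i`. -/
def aborted (H : History) (i : ℕ) : Prop :=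
  Event.res i Resp.aborted ∈ proj i H

/-- `T_i` is commit-pending in `H`. -/
def commitPending (H : History) (i : ℕ) : Prop :=
  Event.inv i Op.tryCommit ∈ proj i H ∧
    Event.res i Resp.committed ∉ proj i H ∧ Event.res i Resp.aborted ∉ proj i H

/-- `T_i` is live in `H`. -/
def live (H : History) (i : ℕ) : Prop :=
  inTxn H i ∧ ¬ committed H i ∧ ¬ aborted H i ∧ ¬ commitPending H i

/-- A complete operation execution by transaction `i` in `H`: the invocation
is at position `ki`, its matching response at position `kr` (no events of `i`
in between). -/
def opExec (H : History) (i ki kr : ℕ) (o : Op) (r : Resp) : Prop :=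
  ki < kr ∧ H[ki]? = some (Event.inv i o) ∧ H[kr]? = some (Event.res i r) ∧
    ∀ (m : ℕ) (e : Event), ki < m → m < kr → H[m]? = some e → e.txn ≠ i

def isInvEvent : Event → Prop
  | .inv _ _ => True
  | .res _ _ => False

def isResEvent : Event → Prop
  | .inv _ _ => False
  | .res _ _ => True

/-- Well-formedness of `H|T_i` (as the list `L`): alternation of invocations
and responses starting with `init_i`, no events after a commit/abort response,
and no invocation after an invocation of `tryC_i` or `tryA_i`. -/
def wellFormedTxn (L : History) (i : ℕ) : Prop :=
  (∀ (k : ℕ) (e : Event), L[k]? = some e →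
      ((k % 2 = 0 → isInvEvent e) ∧ (k % 2 = 1 → isResEvent e))) ∧
  (L ≠ [] → L[0]? = some (Event.inv i Op.init)) ∧
  (∀ k : ℕ, (L[k]? = some (Event.res i Resp.committed) ∨
      L[k]? = some (Event.res i Resp.aborted)) → L.length = k + 1) ∧
  (∀ (k : ℕ) (o : Op), L[k]? = some (Event.inv i o) → (o = Op.tryCommit ∨ o = Op.tryAbort) →
      ∀ (m : ℕ) (o' : Op), L[m]? = some (Event.inv i o') → m ≤ k)

/-- A well-formed history. -/
def wellFormed (H : History) : Prop :=
  ∀ i : ℕ, wellFormedTxn (proj i H) i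

/-- Unique writes: distinct write executions write distinct values, all
different from the initial value 0. -/
def uniqueWrites (H : History) : Prop :=
  ∀ (k1 k2 i1 i2 x1 x2 v1 v2 : ℕ),
    H[k1]? = some (Event.inv i1 (Op.write x1 v1)) →
    H[k2]? = some (Event.inv i2 (Op.write x2 v2)) →
    v1 ≠ 0 ∧ (k1 ≠ k2 → v1 ≠ v2)

/-- Two histories are equivalent if they agree on every `H|T_i`. -/
def equivH (H1 H2 : History) : Prop := ∀ i : ℕ, proj i H1 = proj i H2

/-- Real-time precedence: the last event of `H|T_i` precedes the first event
of `H|T_j` in `H`. -/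
def rtPrec (H : History) (i j : ℕ) : Prop :=
  ∃ k l : ℕ, k < l ∧
    (∃ e : Event, H[k]? = some e ∧ e.txn = i) ∧
    (∃ e : Event, H[l]? = some e ∧ e.txn = j) ∧
    (∀ (m : ℕ) (e : Event), H[m]? = some e → e.txn = i → m ≤ k) ∧
    (∀ (m : ℕ) (e : Event), H[m]? = some e → e.txn = j → l ≤ m)

/-- `S` preserves the real-time order of `H`. -/
def preservesRT (H S : History) : Prop := ∀ i j : ℕ, rtPrec H i j → rtPrec S i j

/-- A sequential history: any two distinct transactions are comparable in the
real-time order. -/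
def sequential (S : History) : Prop :=
  ∀ i j : ℕ, inTxn S i → inTxn S j → i ≠ j → rtPrec S i j ∨ rtPrec S j i

/-- The read of value `v` on variable `x` invoked at position `ki` is
consistent with the sequential specification of `x`: the latest write to `x`
completed before it writes `v`, or there is no such write and `v = 0`. -/
def readsLegally (S : History) (x v ki : ℕ) : Prop :=
  (∃ j kwi kwr : ℕ, kwr < ki ∧ opExec S j kwi kwr (Op.write x v) Resp.ok ∧
      ∀ j' v' kwi' kwr' : ℕ,
        opExec S j' kwi' kwr' (Op.write x v') Resp.ok → kwr' < ki → kwr' ≤ kwr)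
  ∨ (v = 0 ∧ ∀ j v' kwi kwr : ℕ, opExec S j kwi kwr (Op.write x v') Resp.ok → ¬ kwr < ki)

/-- A (sequential) history is legal if its restriction to every variable is in
the variable's sequential specification, i.e. every complete read is
consistent with the latest preceding write. -/
def isLegal (S : History) : Prop :=
  ∀ i x v ki kr : ℕ, opExec S i ki kr (Op.read x) (Resp.value v) → readsLegally S x v ki

/-- Transaction `i` has the pending (unanswered) invocation of `o` in `H`. -/
def pendingInv (H : History) (i : ℕ) (o : Op) : Prop :=
  (proj i H).getLast? = some (Event.inv i o)

/-- `C` is a completion `Compl(H)` of `H`. -/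
def isCompletion (H C : History) : Prop :=
  H <+: C ∧
  (∀ i : ℕ, inTxn C i → inTxn H i) ∧
  (∀ i : ℕ, inTxn C i → committed C i ∨ aborted C i) ∧
  ∀ i : ℕ, inTxn H i →
    ((committed H i ∨ aborted H i) → proj i C = proj i H) ∧
    (¬ committed H i → ¬ aborted H i →
      (pendingInv H i Op.tryCommit →
          proj i C = proj i H ++ [Event.res i Resp.committed]) ∧
      ((∃ o : Op, o ≠ Op.tryCommit ∧ pendingInv H i o) →
          proj i C = proj i H ++ [Event.res i Resp.aborted]) ∧
      ((¬ ∃ o : Op, pendingInv H i o) →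
          proj i C = proj i H ++ [Event.inv i Op.tryCommit, Event.res i Resp.aborted]))

/-- Restriction of a history to the events of a set of transactions. -/
noncomputable def restrictTxns (S : History) (T : Set ℕ) : History :=
  S.filter (fun e => decide (e.txn ∈ T))

/-- `Vis(S,T_i)`: the longest subhistory of `S` containing, for each `T_j` in
`S`, the events of `T_j` iff `j = i` or (`T_j` is committed and `T_j ≺_S T_i`). -/
noncomputable def Vis (S : History) (i : ℕ) : History :=
  restrictTxns S {j | j = i ∨ (committed S j ∧ rtPrec S j i)}

/-- `T_i` is legal in `S` if `Vis(S,T_i)` is legal. -/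
def legalIn (S : History) (i : ℕ) : Prop := isLegal (Vis S i)

/-- Serializability. -/
def serializable (H : History) : Prop :=
  ∃ C S : History, isCompletion H C ∧ sequential S ∧ equivH S C ∧
    ∀ i : ℕ, inTxn S i → committed S i → legalIn S i

/-- The read invoked at position `ki` by `T_j` on `x` is non-local: no write
to `x` by `T_j` precedes it. -/
def nonLocalReadAt (H : History) (j x ki : ℕ) : Prop :=
  ∀ m v : ℕ, m < ki → H[m]? ≠ some (Event.inv j (Op.write x v))

/-- `T_i` releases variable `x` early in `H`. -/
def releasesEarly (H : History) (i x : ℕ) : Prop :=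
  ∃ P : History, P <+: H ∧ live P i ∧
    ∃ j v wki wkr rki rkr : ℕ, j ≠ i ∧
      opExec P i wki wkr (Op.write x v) Resp.ok ∧
      opExec P j rki rkr (Op.read x) (Resp.value v) ∧
      nonLocalReadAt P j x rki ∧
      wkr < rki

/-- Overwriting by `T_i` observed by `T_j` on variable `x` in `H`. -/
def overwriting (H : History) (i j x : ℕ) : Prop :=
  i ≠ j ∧ releasesEarly H i x ∧
  ∃ v v' k1i k1r k2i k2r kri krr : ℕ,
    opExec H i k1i k1r (Op.write x v) Resp.ok ∧
    opExec H i k2i k2r (Op.write x v') Resp.ok ∧ k1r < k2i ∧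
    opExec H j kri krr (Op.read x) (Resp.value v) ∧ krr < k2i

/-- Final-state opacity. -/
def finalStateOpaque (H : History) : Prop :=
  ∃ C S : History, isCompletion H C ∧ sequential S ∧ equivH S C ∧ preservesRT H S ∧
    ∀ i : ℕ, inTxn S i → legalIn S i

/-- Opacity: every finite prefix is final-state opaque. -/
def isOpaque (H : History) : Prop := ∀ P : History, P <+: H → finalStateOpaque P

/-- Causal past of `T_i` in `H`: `T_i` together with the committed or aborted
transactions that precede `T_i` in `H`. -/
def causalPast (H : History) (i : ℕ) : Set ℕ :=
  {j | j = i ∨ ((committed H j ∨ aborted H j) ∧ rtPrec H j i)}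

/-- Virtual world consistency. -/
def VWC (H : History) : Prop :=
  (∃ S : History, sequential S ∧ equivH S (restrictTxns H {j | committed H j}) ∧
      preservesRT H S ∧ ∀ j : ℕ, inTxn S j → committed S j → legalIn S j) ∧
  (∀ i : ℕ, inTxn H i → aborted H i →
      ∃ S : History, sequential S ∧ equivH S (restrictTxns H (causalPast H i)) ∧ isLegal S)

/-! ### Live opacity -/

/-- Index `k` of `L` carries (part of) a read operation execution. -/
def isReadIdx (L : History) (k : ℕ) : Prop :=
  (∃ t x : ℕ, L[k]? = some (Event.inv t (Op.read x))) ∨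
  (1 ≤ k ∧ (∃ t x : ℕ, L[k-1]? = some (Event.inv t (Op.read x))) ∧
    ∃ (t : ℕ) (r : Resp), L[k]? = some (Event.res t r))

/-- Index `k` of `L` carries (part of) a non-local read operation execution. -/
def isNonLocalReadIdx (L : History) (k : ℕ) : Prop :=
  (∃ t x : ℕ, L[k]? = some (Event.inv t (Op.read x)) ∧
      ∀ m t' v : ℕ, m < k → L[m]? ≠ some (Event.inv t' (Op.write x v))) ∨
  (1 ≤ k ∧ (∃ (t : ℕ) (r : Resp), L[k]? = some (Event.res t r)) ∧
    ∃ t x : ℕ, L[k-1]? = some (Event.inv t (Op.read x)) ∧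
      ∀ m t' v : ℕ, m < k - 1 → L[m]? ≠ some (Event.inv t' (Op.write x v)))

/-- The subsequence of `L` of events at indices satisfying `p`. -/
noncomputable def seqOfIdx (L : History) (p : ℕ → Prop) : History :=
  ((List.range L.length).filter (fun k => decide (p k))).filterMap (fun k => L[k]?)

/-- `H|(T_i,r)`: the read operation executions of `T_i`, excluding the last
read if its response is `A_i`. -/
noncomputable def readSeq (H : History) (i : ℕ) : History :=
  let L := proj i H
  let R := seqOfIdx L (isReadIdx L)
  if R.getLast? = some (Event.res i Resp.aborted) then R.dropLast.dropLast else R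

/-- `H|(T_i,gr)`: the non-local read operation executions of `T_i`, excluding
the last read if its response is `A_i`. -/
noncomputable def grSeq (H : History) (i : ℕ) : History :=
  let L := proj i H
  let R := seqOfIdx L (isNonLocalReadIdx L)
  if R.getLast? = some (Event.res i Resp.aborted) then R.dropLast.dropLast else R

/-- The transaction `T_i^gr`. -/
noncomputable def grTxn (H : History) (i : ℕ) : History :=
  if grSeq H i = [] then []
  else [Event.inv i Op.init, Event.res i Resp.ok] ++ grSeq H i ++
       [Event.inv i Op.tryCommit, Event.res i Resp.committed]

/-- `S` justifies the serializability of `H`. -/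
def justifiesSer (S H : History) : Prop :=
  ∃ H' : History, List.Sublist H' H ∧ (∀ e ∈ H', committed H e.txn) ∧
    (∀ j : ℕ, committed H j → proj j H' = proj j H) ∧
    isLegal S ∧ equivH S H'

/-- All complete local reads of `T_i` in `H` have legal responses: the last
preceding write of `T_i` to the variable wrote the value read. -/
def localReadsLegal (H : History) (i : ℕ) : Prop :=
  ∀ x v ki kr : ℕ, opExec (proj i H) i ki kr (Op.read x) (Resp.value v) →
    (∃ m w : ℕ, m < ki ∧ (proj i H)[m]? = some (Event.inv i (Op.write x w))) →
    ∃ m : ℕ, m < ki ∧ (proj i H)[m]? = some (Event.inv i (Op.write x v)) ∧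
      ∀ m' w' : ℕ, m < m' → m' < ki → (proj i H)[m']? ≠ some (Event.inv i (Op.write x w'))

/-- Live opacity. -/
def liveOpaque (H : History) : Prop :=
  ∃ S : History, sequential S ∧ preservesRT H S ∧ justifiesSer S H ∧
    (∃ S' : History, sequential S' ∧ List.Sublist S S' ∧
      (∀ i : ℕ, inTxn H i → ¬ inTxn S i → proj i S' = grTxn H i) ∧
      (∀ i j : ℕ, rtPrec H i j → inTxn S' i → inTxn S' j → rtPrec S' i j) ∧
      isLegal S') ∧
    (∀ i : ℕ, inTxn H i → ¬ inTxn S i → localReadsLegal H i)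

/-! ### Last-use opacity -/

/-- A prefix-closed set of histories (the possible histories of a program). -/
def prefixClosed (E : Set History) : Prop :=
  ∀ H ∈ E, ∀ P : History, P <+: H → P ∈ E

/-- The write execution on `x` by `T_i` at positions `(ki,kr)` is the closing
("last") write on `x` by `T_i` in `H` with respect to the possible histories
`E`: in no extension of `H` in `E` does `T_i` invoke another write on `x`
after it. -/
def closingWrite (E : Set History) (H : History) (i x v ki kr : ℕ) : Prop :=
  opExec H i ki kr (Op.write x v) Resp.ok ∧
  ∀ H' ∈ E, H <+: H' → ∀ m v' : ℕ, H'[m]? = some (Event.inv i (Op.write x v')) → m ≤ ki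

/-- `T_i` decided on `x` in `H` (w.r.t. `E`). -/
def decidedOn (E : Set History) (H : History) (i x : ℕ) : Prop :=
  ∃ v ki kr : ℕ, closingWrite E H i x v ki kr

/-- The variable accessed by an operation. -/
def opVar : Op → Option ℕ
  | .read x => some x
  | .write x _ => some x
  | _ => none

/-- The variable accessed by the event at index `k` of `L` (for a response,
the variable of the matching invocation at `k-1`). -/
def eventVarAt (L : History) (k : ℕ) : Option ℕ :=
  match L[k]? with
  | some (Event.inv _ o) => opVar o
  | some (Event.res _ _) =>
      match L[k-1]? with
      | some (Event.inv _ o) => opVar o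
      | _ => none
  | none => none

/-- The operation execution starting at index `k` of `L` is complete. -/
def completeAt (L : History) (k : ℕ) : Prop :=
  ∀ (t : ℕ) (o : Op), L[k]? = some (Event.inv t o) →
    ∃ (t' : ℕ) (r : Resp), L[k+1]? = some (Event.res t' r)

/-- `Hs⌊T_i` (decided transaction subhistory): the subsequence of `Hs|T_i`
consisting of `init_i` and all complete operation executions on variables on
which `T_i` decided (decidedness judged in `Hd` w.r.t. `E`). -/
noncomputable def lastUseProj (E : Set History) (Hd Hs : History) (i : ℕ) : History :=
  let L := proj i Hs
  seqOfIdx L (fun k => completeAt L k ∧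
    (k ≤ 1 ∨ ∃ x : ℕ, eventVarAt L k = some x ∧ decidedOn E Hd i x))

/-- `Hs⌊^T_i = Hs⌊T_i · [tryC_i → C_i]`. -/
noncomputable def lastUseProjC (E : Set History) (Hd Hs : History) (i : ℕ) : History :=
  lastUseProj E Hd Hs i ++ [Event.inv i Op.tryCommit, Event.res i Resp.committed]

/-- Transactions of a history in order of first occurrence. -/
def txnOrder : History → List ℕ
  | [] => []
  | e :: t => e.txn :: (txnOrder t).filter (fun j => j ≠ e.txn)

/-- The candidate `LUVis(S,T_i)` determined by a choice `inc` of which decided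
non-committed transactions to include: for each transaction `j` of `S` in
order, all of `S|T_j` if `j = i` or `T_j` is committed in `S` and `T_j ≺_S T_i`;
`S⌊^T_j` if `T_j` is non-committed, decided on some variable in `H`,
`T_j ≺_S T_i`, not `T_j ≺_H T_i`, and `inc j` holds; nothing otherwise. -/
noncomputable def buildLUVis (E : Set History) (H S : History) (i : ℕ)
    (inc : ℕ → Prop) : History :=
  (txnOrder S).flatMap (fun j =>
    if j = i ∨ (committed S j ∧ rtPrec S j i) then proj j S
    else if ¬ committed S j ∧ (∃ x : ℕ, decidedOn E H j x) ∧ rtPrec S j i ∧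
        ¬ rtPrec H j i ∧ inc j
      then lastUseProjC E H S j
    else [])

/-- `T_i` is last-use legal in `S`: some admissible `LUVis(S,T_i)` is legal. -/
def lastUseLegal (E : Set History) (H S : History) (i : ℕ) : Prop :=
  ∃ inc : ℕ → Prop, isLegal (buildLUVis E H S i inc)

/-- Final-state last-use opacity with respect to `E`. -/
def finalStateLUOpaque (E : Set History) (H : History) : Prop :=
  ∃ C S : History, isCompletion H C ∧ sequential S ∧ equivH S C ∧ preservesRT H S ∧
    (∀ i : ℕ, inTxn S i → committed S i → legalIn S i) ∧
    (∀ i : ℕ, inTxn S i → ¬ committed S i → lastUseLegal E H S i)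

/-- Last-use opacity with respect to `E`: every finite prefix is final-state
last-use opaque with respect to `E`. -/
def lastUseOpaque (E : Set History) (H : History) : Prop :=
  ∀ P : History, P <+: H → finalStateLUOpaque E P

/-! ### Database conditions -/

/-- `T_j` reads from `T_i` in `H` (unique writes). -/
def readsFrom (H : History) (j i : ℕ) : Prop :=
  ∃ x v kwi kwr kri krr : ℕ,
    opExec H i kwi kwr (Op.write x v) Resp.ok ∧
    opExec H j kri krr (Op.read x) (Resp.value v)

/-- Recoverability: if `T_j` reads from `T_i` then `T_i` commits before `T_j`
commits. -/
def recoverable (H : History) : Prop :=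
  ∀ i j : ℕ, i ≠ j → readsFrom H j i →
    ∀ kc' : ℕ, H[kc']? = some (Event.res j Resp.committed) →
      ∃ kc : ℕ, kc < kc' ∧ H[kc]? = some (Event.res i Resp.committed)

/-- Avoiding cascading aborts: whenever `T_j` reads `x` from `T_i`, the commit
response `C_i` precedes the read. -/
def ACA (H : History) : Prop :=
  ∀ i j x v kwi kwr kri krr : ℕ, i ≠ j →
    opExec H i kwi kwr (Op.write x v) Resp.ok →
    opExec H j kri krr (Op.read x) (Resp.value v) →
    ∃ m : ℕ, m < kri ∧ H[m]? = some (Event.res i Resp.committed)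

/-- Strictness. -/
def strictH (H : History) : Prop :=
  ∀ i j : ℕ, i ≠ j → ∀ x v v' ki kr kwi kwr : ℕ,
    (opExec H i ki kr (Op.read x) (Resp.value v) ∨ opExec H i ki kr (Op.write x v') Resp.ok) →
    opExec H j kwi kwr (Op.write x v) Resp.ok →
    kwr < ki →
    ∃ m : ℕ, m < ki ∧
      (H[m]? = some (Event.res j Resp.committed) ∨ H[m]? = some (Event.res j Resp.aborted))

end TM

/-!
The witness is the history in which `T₁` writes `1` to `x₀`, `T₂` reads this value while `T₁`
is still live, and `T₁` then aborts; the possible histories of the program are its prefixes.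
Every prefix is justified by its canonical completion run serially as `T₁` then `T₂`. Nothing
commits, so only last-use legality has to be checked, and only `T₂`'s read is at stake. `T₁` never
writes again, so it has decided on `x₀` as soon as its write returns, while it does not precede
`T₂` in real time: hence the admissible view of `T₂` may contain the decided part of `T₁`,
committed, and in that view the read of `1` is legal.
-/

namespace TM

theorem mem_proj {H : History} {i : ℕ} {e : Event} : e ∈ proj i H ↔ e ∈ H ∧ e.txn = i := by
  simp [proj]

theorem inTxn_iff {H : History} {i : ℕ} : inTxn H i ↔ ∃ e ∈ H, e.txn = i := by
  simp [inTxn, proj, List.filter_eq_nil_iff]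

theorem proj_proj (i k : ℕ) (H : History) :
    proj k (proj i H) = if i = k then proj i H else [] := by
  split_ifs with h
  · subst h; exact List.filter_eq_self.2 fun e he => by simp [(mem_proj.1 he).2]
  · exact List.filter_eq_nil_iff.2 fun e he => by simp [(mem_proj.1 he).2, h]

theorem mem_txnOrder {H : History} {i : ℕ} : i ∈ txnOrder H ↔ ∃ e ∈ H, e.txn = i := by
  induction H with
  | nil => simp [txnOrder]
  | cons e t ih => by_cases h : i = e.txn <;> simp [txnOrder, ih, h, eq_comm]

theorem nodup_txnOrder (H : History) : (txnOrder H).Nodup := by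
  induction H with
  | nil => exact List.nodup_nil
  | cons e t ih => exact List.nodup_cons.2 ⟨by simp, ih.filter _⟩

theorem flatMap_ite_eq_of_nodup {α β : Type*} [DecidableEq α] {l : List α} (hl : l.Nodup)
    (a : α) (f : α → List β) :
    (l.flatMap fun b => if b = a then f b else []) = if a ∈ l then f a else [] := by
  induction l with
  | nil => simp
  | cons b t ih =>
    obtain ⟨hb, ht⟩ := List.nodup_cons.1 hl
    by_cases hba : b = a
    · subst hba; simp [ih ht, hb]
    · simp [ih ht, hba, Ne.symm hba]

theorem proj_flatMap_of_nodup {l : List ℕ} (hl : l.Nodup) (f : ℕ → History)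
    (hf : ∀ j, ∀ e ∈ f j, e.txn = j) (i : ℕ) :
    proj i (l.flatMap f) = if i ∈ l then f i else [] := by
  have hproj : ∀ j, proj i (f j) = if j = i then f j else [] := by
    intro j
    split_ifs with hji
    · exact List.filter_eq_self.2 fun e he => by simp [hf j e he, hji]
    · exact List.filter_eq_nil_iff.2 fun e he => by simp [hf j e he, hji]
  rw [← flatMap_ite_eq_of_nodup hl, proj, List.filter_flatMap]
  exact List.flatMap_congr fun j _ => hproj j

theorem getElem?_of_prefix {α : Type*} {P H : List α} (hPH : P <+: H) {m : ℕ} {e : α}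
    (hm : P[m]? = some e) : H[m]? = some e := by
  obtain ⟨t, rfl⟩ := hPH
  rwa [List.getElem?_append_left (List.getElem?_eq_some_iff.1 hm).1]

section WellFormed

theorem getLast?_eq_of_wellFormedTxn {L : History} {i : ℕ} {r : Resp}
    (hwf : wellFormedTxn L i) (hr : r = .committed ∨ r = .aborted) (hmem : Event.res i r ∈ L) :
    L.getLast? = some (.res i r) := by
  obtain ⟨k, hk⟩ := List.mem_iff_getElem?.1 hmem
  have hlen := hwf.2.2.1 k (by rcases hr with rfl | rfl <;> simp [hk])
  rw [List.getLast?_eq_getElem?, hlen, Nat.add_sub_cancel, hk]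

theorem wellFormed_of_prefix {P H : History} (hPH : P <+: H) (hwf : wellFormed H) :
    wellFormed P := by
  intro i
  have hpre : proj i P <+: proj i H := hPH.filter _
  obtain ⟨halt, hinit, hterm, hinv⟩ := hwf i
  refine ⟨fun k e hk => halt k e (getElem?_of_prefix hpre hk), fun hne => ?_, fun k hk => ?_,
    fun k o hk ho m o' hm =>
      hinv k o (getElem?_of_prefix hpre hk) ho m o' (getElem?_of_prefix hpre hm)⟩
  · obtain ⟨e, he⟩ : ∃ e, (proj i P)[0]? = some e :=
      ⟨_, List.getElem?_eq_getElem (List.length_pos_iff.2 hne)⟩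
    have heH := getElem?_of_prefix hpre he
    rw [he, ← heH]
    exact hinit fun h => by simp [h] at heH
  · have hkP : k < (proj i P).length := by
      rcases hk with h | h <;> exact (List.getElem?_eq_some_iff.1 h).1
    have := hterm k (hk.imp (getElem?_of_prefix hpre) (getElem?_of_prefix hpre))
    have := hpre.length_le
    omega

instance : DecidablePred isInvEvent
  | .inv _ _ => isTrue trivial
  | .res _ _ => isFalse id

instance : DecidablePred isResEvent
  | .inv _ _ => isFalse id
  | .res _ _ => isTrue trivial

theorem wellFormedTxn_of_forall_lt {L : History} {i : ℕ}
    (halt : ∀ k (hk : k < L.length),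
      (k % 2 = 0 → isInvEvent L[k]) ∧ (k % 2 = 1 → isResEvent L[k]))
    (hinit : L ≠ [] → L[0]? = some (.inv i .init))
    (hterm : ∀ k (hk : k < L.length),
      L[k] = .res i .committed ∨ L[k] = .res i .aborted → L.length = k + 1)
    (hinv : ∀ k (hk : k < L.length), L[k] = .inv i .tryCommit ∨ L[k] = .inv i .tryAbort →
      ∀ m (hm : m < L.length), isInvEvent L[m] → m ≤ k) :
    wellFormedTxn L i := by
  refine ⟨fun k e hk => ?_, hinit, fun k hk => ?_, fun k o hk ho m o' hm => ?_⟩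
  · obtain ⟨hlt, rfl⟩ := List.getElem?_eq_some_iff.1 hk
    exact halt k hlt
  · rcases hk with hk | hk <;> obtain ⟨hlt, he⟩ := List.getElem?_eq_some_iff.1 hk
    · exact hterm k hlt (.inl he)
    · exact hterm k hlt (.inr he)
  · obtain ⟨hlt, he⟩ := List.getElem?_eq_some_iff.1 hk
    obtain ⟨hmlt, he'⟩ := List.getElem?_eq_some_iff.1 hm
    exact hinv k hlt (by rcases ho with rfl | rfl <;> simp [he]) m hmlt
      (by simp [he', isInvEvent])

end WellFormed

section Completion

def completionSuffix (i : ℕ) : Option Event → History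
  | some (.inv _ .tryCommit) => [.res i .committed]
  | some (.inv _ _) => [.res i .aborted]
  | some (.res _ .committed) | some (.res _ .aborted) | none => []
  | some (.res _ _) => [.inv i .tryCommit, .res i .aborted]

def complete (H : History) : History :=
  H ++ (txnOrder H).flatMap fun i => completionSuffix i (proj i H).getLast?

theorem txn_of_mem_completionSuffix {i : ℕ} {last : Option Event} {e : Event}
    (he : e ∈ completionSuffix i last) : e.txn = i := by
  unfold completionSuffix at he
  split at he <;> simp at he <;> rcases he with rfl | rfl <;> rfl

theorem proj_complete (H : History) (i : ℕ) :
    proj i (complete H) = proj i H ++ completionSuffix i (proj i H).getLast? := by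
  rw [complete, proj, List.filter_append, ← proj, ← proj,
    proj_flatMap_of_nodup (nodup_txnOrder H) _ fun j _ => txn_of_mem_completionSuffix]
  split_ifs with hi
  · rfl
  · have : proj i H = [] := by
      rw [← not_ne_iff, ← inTxn, inTxn_iff, ← mem_txnOrder]; exact hi
    simp [this, completionSuffix]

theorem txn_of_getLast?_proj {H : History} {i : ℕ} {e : Event}
    (h : (proj i H).getLast? = some e) : e.txn = i :=
  (mem_proj.1 (List.mem_of_getLast? h)).2

theorem isCompletion_complete {H : History} (hwf : wellFormed H)
    (hcommit : ∀ i, (proj i H).getLast? = some (.res i .committed) → committed H i) :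
    isCompletion H (complete H) := by
  have hfinished : ∀ i, committed H i ∨ aborted H i →
      (proj i H).getLast? = some (.res i .committed) ∨
        (proj i H).getLast? = some (.res i .aborted) := by
    rintro i (hc | ha)
    · exact .inl (getLast?_eq_of_wellFormedTxn (hwf i) (.inl rfl) (hc.subset (by simp)))
    · exact .inr (getLast?_eq_of_wellFormedTxn (hwf i) (.inr rfl) ha)
  refine ⟨⟨_, rfl⟩, fun i hi => ?_, fun i hi => ?_, fun i hi => ⟨fun hfin => ?_, ?_⟩⟩ <;>
    simp only [inTxn, committed, aborted, pendingInv, proj_complete] at *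
  · intro h; simp [h, completionSuffix] at hi
  · have hne : proj i H ≠ [] := fun h => by simp [h, completionSuffix] at hi
    obtain ⟨e, he⟩ : ∃ e, (proj i H).getLast? = some e :=
      ⟨_, List.getLast?_eq_some_getLast hne⟩
    have hmem := List.mem_of_getLast? he
    rcases e with ⟨t, o⟩ | ⟨t, r⟩ <;> obtain rfl : t = i := txn_of_getLast?_proj he
    · cases o <;> simp [he, completionSuffix]
      exact .inl ((List.singleton_sublist.2 hmem).append (List.Sublist.refl _))
    · cases r <;> simp [he, completionSuffix, hmem]
      exact .inl (hcommit _ he)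
  · rcases hfinished i hfin with h | h <;> simp [h, completionSuffix]
  · intro hnc hna
    refine ⟨fun h => by simp [h, completionSuffix], fun ⟨o, ho, h⟩ => ?_, fun hnp => ?_⟩
    · cases o <;> simp_all [completionSuffix]
    · obtain ⟨e, he⟩ : ∃ e, (proj i H).getLast? = some e :=
        ⟨_, List.getLast?_eq_some_getLast hi⟩
      rcases e with ⟨t, o⟩ | ⟨t, r⟩ <;> obtain rfl : t = i := txn_of_getLast?_proj he
      · exact absurd ⟨o, he⟩ hnp
      · cases r <;> simp [he, completionSuffix]
        · exact hnc (hcommit _ he)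
        · exact hna (List.mem_of_getLast? he)

end Completion

section RealTime

theorem rtPrec_irrefl (H : History) (i : ℕ) : ¬ rtPrec H i i := by
  rintro ⟨k, l, hkl, ⟨e, hk, he⟩, -, -, hfirst⟩
  exact absurd (hfirst k e hk he) (by omega)

theorem not_rtPrec_of_le {H : History} {i j a b : ℕ} {e e' : Event}
    (ha : H[a]? = some e) (he : e.txn = i) (hb : H[b]? = some e') (he' : e'.txn = j)
    (hba : b ≤ a) : ¬ rtPrec H i j := by
  rintro ⟨k, l, hkl, -, -, hlast, hfirst⟩
  have := hlast a e ha he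
  have := hfirst b e' hb he'
  omega

theorem not_rtPrec_of_head {H : History} {i j : ℕ} (h : ∀ e ∈ H.head?, e.txn = i) :
    ¬ rtPrec H j i := by
  intro hrt
  obtain ⟨k, -, -, ⟨e, hk, he⟩, -⟩ := id hrt
  cases H with
  | nil => simp at hk
  | cons e₀ t => exact not_rtPrec_of_le hk he rfl (h e₀ rfl) k.zero_le hrt

theorem rtPrec_append {L₁ L₂ : History} {i j : ℕ} (hij : i ≠ j)
    (h₁ : ∀ e ∈ L₁, e.txn = i) (h₂ : ∀ e ∈ L₂, e.txn = j) (hne₁ : L₁ ≠ []) (hne₂ : L₂ ≠ []) :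
    rtPrec (L₁ ++ L₂) i j := by
  have hpos : 0 < L₁.length := List.length_pos_iff.2 hne₁
  refine ⟨L₁.length - 1, L₁.length, by omega, ⟨L₁.getLast hne₁, ?_, h₁ _ (List.getLast_mem _)⟩,
    ⟨L₂.head hne₂, ?_, h₂ _ (List.head_mem _)⟩, fun m e hm he => ?_, fun m e hm he => ?_⟩
  · rw [List.getElem?_append_left (by omega), List.getLast_eq_getElem, List.getElem?_eq_getElem]
  · rw [List.getElem?_append_right le_rfl, Nat.sub_self, List.head?_eq_getElem?.symm,
      List.head?_eq_some_head hne₂]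
  · by_contra hlt
    rw [List.getElem?_append_right (by omega)] at hm
    exact hij (he ▸ h₂ e (List.mem_of_getElem? hm))
  · by_contra hlt
    rw [List.getElem?_append_left (by omega)] at hm
    exact hij (he ▸ (h₁ e (List.mem_of_getElem? hm)).symm)

end RealTime

def serial (C : History) (i j : ℕ) : History := proj i C ++ proj j C

section Serial

variable {C : History} {i j : ℕ}

theorem equivH_serial (hij : i ≠ j) (htxn : ∀ e ∈ C, e.txn = i ∨ e.txn = j) :
    equivH (serial C i j) C := by
  intro k
  rw [serial, proj, List.filter_append, ← proj, ← proj, proj_proj, proj_proj]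
  by_cases hi : i = k
  · subst hi; simp [Ne.symm hij]
  by_cases hj : j = k
  · subst hj; simp [hi]
  simp only [hi, hj, if_false, List.append_nil]
  exact (List.filter_eq_nil_iff.2 fun e he => by rcases htxn e he with h | h <;> simp [*] at *).symm

theorem rtPrec_serial (hij : i ≠ j) (hi : inTxn C i) (hj : inTxn C j) :
    rtPrec (serial C i j) i j :=
  rtPrec_append hij (fun _ he => (mem_proj.1 he).2) (fun _ he => (mem_proj.1 he).2) hi hj

theorem inTxn_serial {k : ℕ} (hij : i ≠ j) (htxn : ∀ e ∈ C, e.txn = i ∨ e.txn = j) :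
    inTxn (serial C i j) k ↔ inTxn C k := by
  rw [inTxn, inTxn, equivH_serial hij htxn]

theorem eq_or_eq_of_inTxn_serial {k : ℕ} (hk : inTxn (serial C i j) k) : k = i ∨ k = j := by
  obtain ⟨e, he, rfl⟩ := inTxn_iff.1 hk
  rcases List.mem_append.1 he with h | h
  · exact .inl (mem_proj.1 h).2
  · exact .inr (mem_proj.1 h).2

theorem sequential_serial (hij : i ≠ j) (htxn : ∀ e ∈ C, e.txn = i ∨ e.txn = j) :
    sequential (serial C i j) := by
  intro a b ha hb hab
  rcases eq_or_eq_of_inTxn_serial ha with rfl | rfl <;>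
    rcases eq_or_eq_of_inTxn_serial hb with rfl | rfl <;>
    rw [inTxn_serial hij htxn] at ha hb
  · exact absurd rfl hab
  · exact .inl (rtPrec_serial hij ha hb)
  · exact .inr (rtPrec_serial hij hb ha)
  · exact absurd rfl hab

theorem preservesRT_serial {P : History} (hij : i ≠ j) (hPC : P <+: C)
    (htxn : ∀ e ∈ C, e.txn = i ∨ e.txn = j) (hji : ¬ rtPrec P j i) :
    preservesRT P (serial C i j) := by
  have htxnP : ∀ a k : ℕ, ∀ e : Event, P[k]? = some e → e.txn = a →
      inTxn C a ∧ (a = i ∨ a = j) := by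
    rintro a k e hk rfl
    have he := hPC.subset (List.mem_of_getElem? hk)
    exact ⟨inTxn_iff.2 ⟨e, he, rfl⟩, htxn e he⟩
  intro a b hab
  obtain ⟨k, l, -, ⟨e, hk, hea⟩, ⟨e', hl, heb⟩, -⟩ := id hab
  obtain ⟨ha, rfl | rfl⟩ := htxnP a k e hk hea <;> obtain ⟨hb, rfl | rfl⟩ := htxnP b l e' hl heb
  · exact absurd hab (rtPrec_irrefl P _)
  · exact rtPrec_serial hij ha hb
  · exact absurd hab hji
  · exact absurd hab (rtPrec_irrefl P _)

theorem finalStateLUOpaque_of_serial {E : Set History} {P : History} (hij : i ≠ j)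
    (hC : isCompletion P C) (htxn : ∀ e ∈ C, e.txn = i ∨ e.txn = j) (hji : ¬ rtPrec P j i)
    (hlegal : ∀ k, inTxn (serial C i j) k → committed (serial C i j) k →
      legalIn (serial C i j) k)
    (hlastUse : ∀ k, inTxn (serial C i j) k → ¬ committed (serial C i j) k →
      lastUseLegal E P (serial C i j) k) :
    finalStateLUOpaque E P :=
  ⟨C, serial C i j, hC, sequential_serial hij htxn, equivH_serial hij htxn,
    preservesRT_serial hij hC.1 htxn hji, hlegal, hlastUse⟩

end Serial

section Legality

theorem opExec_succ {H : History} {i k : ℕ} {o : Op} {r : Resp}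
    (hinv : H[k]? = some (.inv i o)) (hres : H[k + 1]? = some (.res i r)) :
    opExec H i k (k + 1) o r :=
  ⟨k.lt_succ_self, hinv, hres, fun _ _ hlt hgt _ => absurd hgt (by omega)⟩

theorem opExec_response_unique {H : History} {i i' ki kr kr' : ℕ} {o o' : Op} {r r' : Resp}
    (h : opExec H i ki kr o r) (h' : opExec H i' ki kr' o' r') : kr = kr' := by
  obtain rfl : i = i' := by
    have := h.2.1.symm.trans h'.2.1
    simp only [Option.some.injEq, Event.inv.injEq] at this
    exact this.1
  by_contra hne
  rcases Nat.lt_or_gt_of_ne hne with hlt | hlt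
  · exact h'.2.2.2 kr _ h.1 hlt h.2.2.1 rfl
  · exact h.2.2.2 kr' _ h'.1 hlt h'.2.2.1 rfl

theorem readsLegally_of_unique_write {S : History} {j x v ki kwi kwr : ℕ}
    (hw : opExec S j kwi kwr (.write x v) .ok) (hlt : kwr < ki)
    (huniq : ∀ m j' v', S[m]? = some (.inv j' (.write x v')) → m = kwi) :
    readsLegally S x v ki :=
  .inl ⟨j, kwi, kwr, hlt, hw, fun _ _ _ _ hw' _ => by
    obtain rfl := huniq _ _ _ hw'.2.1
    exact (opExec_response_unique hw' hw).le⟩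

def Event.isReadResponse : Event → Bool
  | .res _ (.value _) => true
  | _ => false

theorem isLegal_of_forall_not_isReadResponse {L : History}
    (h : ∀ e ∈ L, e.isReadResponse = false) : isLegal L :=
  fun _ _ _ _ _ hread =>
    absurd (h _ (List.mem_of_getElem? hread.2.2.1)) (by simp [Event.isReadResponse])

theorem not_committed_of_forall_ne {H : History} (h : ∀ e ∈ H, e ≠ .res e.txn .committed)
    (i : ℕ) : ¬ committed H i :=
  fun hc => h _ (mem_proj.1 (hc.subset (List.mem_cons_of_mem _ (List.mem_singleton_self _)))).1 rfl

end Legality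

section LastUseVisibility

variable {E : Set History} {H S : History} {i j : ℕ}

theorem buildLUVis_of_not_committed (hnc : ∀ k, ¬ committed S k) (hi : inTxn S i) :
    buildLUVis E H S i (fun _ => False) = proj i S := by
  calc buildLUVis E H S i (fun _ => False)
      = (txnOrder S).flatMap (fun k => if k = i then proj k S else []) := by
        unfold buildLUVis
        exact List.flatMap_congr fun k _ => by simp [hnc k]
    _ = proj i S := by
        rw [flatMap_ite_eq_of_nodup (nodup_txnOrder S), if_pos (mem_txnOrder.2 (inTxn_iff.1 hi))]

theorem buildLUVis_of_decidedOn {x : ℕ} (hord : txnOrder S = [i, j]) (hij : i ≠ j)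
    (hnc : ¬ committed S i) (hd : decidedOn E H i x) (hS : rtPrec S i j) (hH : ¬ rtPrec H i j) :
    buildLUVis E H S j (· = i) = lastUseProjC E H S i ++ proj j S := by
  have hdec : ∃ x, decidedOn E H i x := ⟨x, hd⟩
  simp [buildLUVis, hord, hij, hnc, hS, hH, hdec]

theorem completeAt_iff {L : History} {k : ℕ} :
    completeAt L k ↔ ∀ e ∈ L[k]?, isInvEvent e → ∃ e' ∈ L[k + 1]?, isResEvent e' := by
  unfold completeAt
  constructor
  · rintro h (_ | _) he hinv
    · obtain ⟨t', r, h'⟩ := h _ _ he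
      exact ⟨_, h', trivial⟩
    · exact hinv.elim
  · intro h t o he
    obtain ⟨_ | _, h', hres⟩ := h _ he trivial
    · exact absurd hres id
    · exact ⟨_, _, h'⟩

instance (L : History) (k : ℕ) : Decidable (completeAt L k) :=
  decidable_of_iff' _ completeAt_iff

theorem seqOfIdx_eq_filterMap (L : History) (p : ℕ → Prop) [DecidablePred p] :
    seqOfIdx L p = ((List.range L.length).filter fun k => decide (p k)).filterMap (L[·]?) := by
  unfold seqOfIdx
  congr
  funext k
  congr

theorem lastUseProj_eq_seqOfIdx {D : List ℕ} (hD : ∀ x, decidedOn E H i x ↔ x ∈ D) :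
    lastUseProj E H S i = seqOfIdx (proj i S) fun k => completeAt (proj i S) k ∧
      (k ≤ 1 ∨ ∃ x ∈ eventVarAt (proj i S) k, x ∈ D) := by
  simp only [lastUseProj, hD, Option.mem_def]

end LastUseVisibility

section Example

def prefixes (H : History) : Set History := {P | P <+: H}

theorem prefixClosed_prefixes (H : History) : prefixClosed (prefixes H) :=
  fun _ hH _ hP => hP.trans hH

def abortingHistory : History :=
  [.inv 1 .init, .res 1 .ok, .inv 2 .init, .res 2 .ok, .inv 1 (.write 0 1), .res 1 .ok,
    .inv 2 (.read 0), .res 2 (.value 1), .inv 1 .tryAbort, .res 1 .aborted]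

theorem eq_of_abortingHistory_write {m t x v : ℕ}
    (h : abortingHistory[m]? = some (.inv t (.write x v))) :
    m = 4 ∧ t = 1 ∧ x = 0 ∧ v = 1 := by
  have hm : m < 10 := (List.getElem?_eq_some_iff.1 h).1
  interval_cases m <;> simp [abortingHistory] at h ⊢
  omega

theorem txn_of_mem_abortingHistory {e : Event} (he : e ∈ abortingHistory) :
    e.txn = 1 ∨ e.txn = 2 := by
  revert e; decide

theorem wellFormed_abortingHistory : wellFormed abortingHistory := by
  intro i
  by_cases hi : inTxn abortingHistory i
  · obtain ⟨e, he, rfl⟩ := inTxn_iff.1 hi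
    rcases txn_of_mem_abortingHistory he with h | h <;> rw [h] <;>
      exact wellFormedTxn_of_forall_lt (by decide) (by decide) (by decide) (by decide)
  · rw [inTxn, not_not] at hi
    rw [hi]
    exact wellFormedTxn_of_forall_lt (by simp) (by simp) (by simp) (by simp)

theorem uniqueWrites_abortingHistory : uniqueWrites abortingHistory := by
  intro k₁ k₂ i₁ i₂ x₁ x₂ v₁ v₂ h₁ h₂
  obtain ⟨rfl, -, -, rfl⟩ := eq_of_abortingHistory_write h₁
  obtain ⟨rfl, -, -, -⟩ := eq_of_abortingHistory_write h₂
  exact ⟨one_ne_zero, fun h => absurd rfl h⟩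

theorem releasesEarly_abortingHistory : releasesEarly abortingHistory 1 0 := by
  refine ⟨abortingHistory.take 8, List.take_prefix _ _,
    ⟨by unfold inTxn; decide, not_committed_of_forall_ne (by decide) 1,
      by unfold aborted; decide, fun h => absurd h.1 (by decide)⟩,
    2, 1, 4, 5, 6, 7, by decide, opExec_succ rfl rfl, opExec_succ rfl rfl, ?_, by decide⟩
  intro m v _ hm
  have := (eq_of_abortingHistory_write (getElem?_of_prefix (List.take_prefix _ _) hm)).2.1
  omega

theorem decidedOn_abortingHistory_take_iff {n x : ℕ} (hn : 6 ≤ n) :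
    decidedOn (prefixes abortingHistory) (abortingHistory.take n) 1 x ↔ x ∈ [0] := by
  constructor
  · rintro ⟨v, ki, kr, hw, -⟩
    simpa using (eq_of_abortingHistory_write
      (getElem?_of_prefix (List.take_prefix _ _) hw.2.1)).2.2.1
  · rw [List.mem_singleton]
    rintro rfl
    refine ⟨1, 4, 5, opExec_succ ?_ ?_, fun H' hH' _ m v' hm =>
      (eq_of_abortingHistory_write (getElem?_of_prefix hH' hm)).1.le⟩ <;>
      rw [List.getElem?_take_of_lt (by omega)] <;> rfl

/-- The admissible `LUVis(S, T₂)` once `T₂` has read `x₀`. -/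
def readerView : History :=
  [.inv 1 .init, .res 1 .ok, .inv 1 (.write 0 1), .res 1 .ok, .inv 1 .tryCommit,
    .res 1 .committed, .inv 2 .init, .res 2 .ok, .inv 2 (.read 0), .res 2 (.value 1),
    .inv 2 .tryCommit, .res 2 .aborted]

theorem isLegal_readerView : isLegal readerView := by
  rintro i x v ki kr ⟨hlt, hki, hkr, -⟩
  have hki' : ki < 12 := (List.getElem?_eq_some_iff.1 hki).1
  have hkr' : kr < 12 := (List.getElem?_eq_some_iff.1 hkr).1
  interval_cases ki <;> simp [readerView] at hki
  obtain ⟨rfl, rfl⟩ := hki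
  interval_cases kr <;> simp [readerView] at hkr
  obtain ⟨-, rfl⟩ := hkr
  refine readsLegally_of_unique_write (opExec_succ (k := 2) rfl rfl) (by omega) fun m j v h => ?_
  have hm : m < 12 := (List.getElem?_eq_some_iff.1 h).1
  interval_cases m <;> simp [readerView] at h ⊢

theorem lastUseLegal_abortingHistory_reader {n : ℕ} (h8 : 8 ≤ n) (hn : n ≤ 10) :
    lastUseLegal (prefixes abortingHistory) (abortingHistory.take n)
      (serial (complete (abortingHistory.take n)) 1 2) 2 := by
  have hd := decidedOn_abortingHistory_take_iff (n := n) (x := 0) (by omega)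
  have hP : ¬ rtPrec (abortingHistory.take n) 1 2 :=
    not_rtPrec_of_le (a := 4) (b := 2) (e := .inv 1 (.write 0 1)) (e' := .inv 2 .init)
      (by rw [List.getElem?_take_of_lt (by omega)]; rfl) rfl
      (by rw [List.getElem?_take_of_lt (by omega)]; rfl) rfl (by omega)
  have hnc : ¬ committed (serial (complete (abortingHistory.take n)) 1 2) 1 :=
    not_committed_of_forall_ne (by interval_cases n <;> decide) 1
  refine ⟨(· = 1), ?_⟩
  rw [buildLUVis_of_decidedOn ?_ (by decide) hnc (hd.2 (List.mem_singleton_self 0))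
    (rtPrec_serial (by decide) ?_ ?_) hP, lastUseProjC,
    lastUseProj_eq_seqOfIdx fun _ => decidedOn_abortingHistory_take_iff (by omega),
    seqOfIdx_eq_filterMap]
  · convert isLegal_readerView using 1
    interval_cases n <;> decide
  all_goals try unfold inTxn
  all_goals interval_cases n <;> decide

theorem finalStateLUOpaque_abortingHistory_take {n : ℕ} (hn : n ≤ 10) :
    finalStateLUOpaque (prefixes abortingHistory) (abortingHistory.take n) := by
  have hchecks : ∀ n < 11,
      (∀ e ∈ complete (abortingHistory.take n), e.txn = 1 ∨ e.txn = 2) ∧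
      (∀ e ∈ (abortingHistory.take n).head?, e.txn = 1) ∧
      (∀ e ∈ serial (complete (abortingHistory.take n)) 1 2, e ≠ .res e.txn .committed) ∧
      ∀ e ∈ proj 1 (serial (complete (abortingHistory.take n)) 1 2),
        e.isReadResponse = false := by
    decide
  have hreader : ∀ n < 8, ∀ e ∈ proj 2 (serial (complete (abortingHistory.take n)) 1 2),
      e.isReadResponse = false := by
    decide
  have hnoCommit : ∀ e ∈ abortingHistory, e ≠ .res e.txn .committed := by decide
  obtain ⟨htxn, hhead, hnoCommitS, hwriter⟩ := hchecks n (by omega)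
  have hnc := not_committed_of_forall_ne hnoCommitS
  refine finalStateLUOpaque_of_serial (by decide) (isCompletion_complete ?_ fun i h => ?_) htxn
    (not_rtPrec_of_head hhead) (fun k _ hk => absurd hk (hnc k)) fun k hk _ => ?_
  · exact wellFormed_of_prefix (List.take_prefix _ _) wellFormed_abortingHistory
  · have hmem := (List.take_prefix _ _).subset (mem_proj.1 (List.mem_of_getLast? h)).1
    exact absurd rfl (hnoCommit _ hmem)
  rcases eq_or_eq_of_inTxn_serial hk with rfl | rfl
  · exact ⟨fun _ => False, by
      rw [buildLUVis_of_not_committed hnc hk]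
      exact isLegal_of_forall_not_isReadResponse hwriter⟩
  by_cases hread : n < 8
  · exact ⟨fun _ => False, by
      rw [buildLUVis_of_not_committed hnc hk]
      exact isLegal_of_forall_not_isReadResponse (hreader n hread)⟩
  · exact lastUseLegal_abortingHistory_reader (by omega) hn

end Example

/-- Last-use opacity supports aborting early release: there
exist a prefix-closed set `E` of histories and a (well-formed, unique-writes)
history `H ∈ E` that is last-use opaque w.r.t. `E` and contains a transaction
`T_i` that releases some variable early in `H` and whose subhistory `H|T_i`
contains the abort response `A_i`. -/
theorem lastUse_opacity_supports_aborting_early_release :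
    ∃ (E : Set History) (H : History) (i x : ℕ),
      prefixClosed E ∧ H ∈ E ∧ wellFormed H ∧ uniqueWrites H ∧
      lastUseOpaque E H ∧ releasesEarly H i x ∧
      Event.res i Resp.aborted ∈ proj i H := by
  refine ⟨prefixes abortingHistory, abortingHistory, 1, 0, prefixClosed_prefixes _,
    List.prefix_refl _, wellFormed_abortingHistory, uniqueWrites_abortingHistory,
    fun P hP => ?_, releasesEarly_abortingHistory, by decide⟩
  rw [List.prefix_iff_eq_take.1 hP]
  exact finalStateLUOpaque_abortingHistory_take (by simpa [abortingHistory] using hP.length_le)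

end TM
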